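/- arXiv:1006.5137 — 4 statements merged into one kernel-verified Lean document; each statement's English description precedes it below -/
import Mathlib

section
/- Let K = {x ∈ ℝⁿ : gⱼ(x) ≥ 0, j = 1,…,m} be convex and compact with each gⱼ continuously differentiable, Slater's condition holding, and the nondegeneracy condition: ∇gⱼ(x) ≠ 0 for every x ∈ K with gⱼ(x) = 0. Let f be convex and continuously differentiable. If (x_{μ_ℓ}) is a sequence of stationary points of the log-barrier φ_{μ_ℓ} (i.e., ∇f(x_{μ_ℓ}) = ∑ⱼ (μ_ℓ/gⱼ(x_{μ_ℓ})) ∇gⱼ(x_{μ_ℓ}) with all gⱼ(x_{μ_ℓ}) > 0) with μ_ℓ → 0 and x_{μ_ℓ} → x* ∈ K, then x* is a global minimizer of f on K. -/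
/-!
The multipliers `μ / gⱼ(x_ℓ)` are nonnegative and tend to zero for the constraints inactive at
`x*`. For an active constraint, `x*` minimizes `gⱼ ≥ 0` over the convex set `K`, so `∇gⱼ(x*)` is
nonnegative on `K - x*`; being nonzero, it is strictly positive on `interior K - x*`. Pairing the
stationarity equation with `z - x_ℓ` for `z ∈ interior K` therefore gives
`⟪∇f(x*), z - x*⟫ ≥ 0` in the limit, hence `f x* ≤ f z` by convexity of `f`. Since the iterates
lie in the interior of `K`, every point of `K` is a limit of interior points, and continuity of
`f` finishes the proof.
-/

open Filter Set Topology RealInnerProductSpace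

section InnerProductSpace

variable {E : Type*} [NormedAddCommGroup E] [InnerProductSpace ℝ E]

theorem IsMinOn.fderiv_sub_nonneg {g : E → ℝ} {s : Set E} {a b : E} (hmin : IsMinOn g s a)
    (hs : Convex ℝ s) (ha : a ∈ s) (hb : b ∈ s) (hd : DifferentiableAt ℝ g a) :
    0 ≤ fderiv ℝ g a (b - a) :=
  hmin.localize.hasFDerivWithinAt_nonneg hd.hasFDerivAt.hasFDerivWithinAt
    (sub_mem_posTangentConeAt_of_segment_subset (hs.segment_subset ha hb))

theorem ConvexOn.fderiv_sub_le {f : E → ℝ} {s : Set E} {a b : E} (hf : ConvexOn ℝ s f)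
    (ha : a ∈ s) (hb : b ∈ s) (hd : DifferentiableAt ℝ f a) :
    fderiv ℝ f a (b - a) ≤ f b - f a := by
  let γ : ℝ →ᵃ[ℝ] E := AffineMap.lineMap a b
  have hline : ConvexOn ℝ (γ ⁻¹' s) (f ∘ γ) := hf.comp_affineMap γ
  have hderiv : HasDerivAt (f ∘ γ) (fderiv ℝ f a (b - a)) 0 := by
    have hd' : HasFDerivAt f (fderiv ℝ f a) (AffineMap.lineMap a b (0 : ℝ)) := by
      simpa using hd.hasFDerivAt
    exact hd'.comp_hasDerivAt 0 AffineMap.hasDerivAt_lineMap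
  simpa [slope, γ] using
    hline.le_slope_of_hasDerivAt (by simpa [γ]) (by simpa [γ]) zero_lt_one hderiv

theorem inner_sub_pos_of_mem_interior {s : Set E} {u a z : E} (hu : u ≠ 0)
    (hs : ∀ w ∈ s, 0 ≤ ⟪u, w - a⟫) (hz : z ∈ interior s) : 0 < ⟪u, z - a⟫ := by
  have hnear : ∀ᶠ t in 𝓝[>] (0 : ℝ), z - t • u ∈ s := by
    refine (Tendsto.mono_left ?_ nhdsWithin_le_nhds).eventually (mem_interior_iff_mem_nhds.1 hz)
    have hcont : Continuous fun t : ℝ => z - t • u := by fun_prop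
    simpa using hcont.tendsto 0
  obtain ⟨t, hts, ht⟩ := (hnear.and self_mem_nhdsWithin).exists
  have key := hs _ hts
  rw [show z - t • u - a = (z - a) - t • u by abel, inner_sub_right, real_inner_smul_right,
    real_inner_self_eq_norm_sq] at key
  have : 0 < t * ‖u‖ ^ 2 := mul_pos ht (by positivity)
  linarith

theorem Convex.forall_le_of_forall_mem_interior_le {s : Set E} (hs : Convex ℝ s)
    (hint : (interior s).Nonempty) {f : E → ℝ} (hf : Continuous f) {c : ℝ}
    (h : ∀ z ∈ interior s, c ≤ f z) : ∀ y ∈ s, c ≤ f y := by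
  intro y hy
  have : y ∈ closure (interior s) := by
    rw [hs.closure_interior_eq_closure_of_nonempty_interior hint]
    exact subset_closure hy
  exact closure_minimal h (isClosed_le continuous_const hf) this

end InnerProductSpace

theorem nonneg_of_tendsto_finset_sum {ι α : Type*} {l : Filter α} [l.NeBot] {s : Finset ι}
    {c : ι → α → ℝ} {L : ℝ} (hc : ∀ i ∈ s, (∀ᶠ a in l, 0 ≤ c i a) ∨ Tendsto (c i) l (𝓝 0))
    (hL : Tendsto (fun a => ∑ i ∈ s, c i a) l (𝓝 L)) : 0 ≤ L := by
  have hneg : ∀ i ∈ s, Tendsto (fun a => min (c i a) 0) l (𝓝 0) := by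
    intro i hi
    rcases hc i hi with hpos | hzero
    · exact tendsto_const_nhds.congr' (hpos.mono fun a ha => (min_eq_right ha).symm)
    · simpa using hzero.min (tendsto_const_nhds (x := (0 : ℝ)))
  have hsum := tendsto_finsetSum s hneg
  rw [Finset.sum_const_zero] at hsum
  exact le_of_tendsto_of_tendsto' hsum hL fun a => Finset.sum_le_sum fun i _ => min_le_left _ _

section Gradient

variable {E : Type*} [NormedAddCommGroup E] [InnerProductSpace ℝ E] [CompleteSpace E]

theorem ContDiff.continuous_gradient {f : E → ℝ} (hf : ContDiff ℝ 1 f) : Continuous (gradient f) :=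
  (InnerProductSpace.toDual ℝ E).symm.continuous.comp (hf.continuous_fderiv one_ne_zero)

theorem barrier_term_eventually_nonneg_or_tendsto_zero {α : Type*} {l : Filter α} {g : E → ℝ}
    {K : Set E} (hg : ContDiff ℝ 1 g) (hK : Convex ℝ K) (hgK : ∀ p ∈ K, 0 ≤ g p) {xs z : E}
    (hxs : xs ∈ K) (hnd : g xs = 0 → gradient g xs ≠ 0) (hz : z ∈ interior K) {μ : α → ℝ}
    (hμ : ∀ a, 0 ≤ μ a) (hμ0 : Tendsto μ l (𝓝 0)) {x : α → E} (hfeas : ∀ a, 0 ≤ g (x a))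
    (hlim : Tendsto x l (𝓝 xs)) :
    (∀ᶠ a in l, 0 ≤ μ a / g (x a) * ⟪gradient g (x a), z - x a⟫) ∨
      Tendsto (fun a => μ a / g (x a) * ⟪gradient g (x a), z - x a⟫) l (𝓝 0) := by
  have hinner : Tendsto (fun a => ⟪gradient g (x a), z - x a⟫) l (𝓝 ⟪gradient g xs, z - xs⟫) :=
    ((hg.continuous_gradient.tendsto xs).comp hlim).inner (tendsto_const_nhds.sub hlim)
  rcases (hgK xs hxs).eq_or_lt with hactive | hinactive
  · left
    have hmin : IsMinOn g K xs := isMinOn_iff.2 fun w hw => hactive ▸ hgK w hw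
    have hfirst : ∀ w ∈ K, 0 ≤ ⟪gradient g xs, w - xs⟫ := fun w hw => by
      rw [inner_gradient_left]
      exact hmin.fderiv_sub_nonneg hK hxs hw (hg.differentiable one_ne_zero xs)
    have hpos := inner_sub_pos_of_mem_interior (hnd hactive.symm) hfirst hz
    filter_upwards [hinner.eventually (lt_mem_nhds hpos)] with a ha
    exact mul_nonneg (div_nonneg (hμ a) (hfeas a)) ha.le
  · right
    simpa using (hμ0.div ((hg.continuous.tendsto xs).comp hlim) hinactive.ne').mul hinner

theorem barrier_limit_inner_gradient_nonneg {ι α : Type*} [Fintype ι] {l : Filter α} [l.NeBot]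
    {g : ι → E → ℝ} {f : E → ℝ} {K : Set E} (hg : ∀ j, ContDiff ℝ 1 (g j))
    (hf : ContDiff ℝ 1 f) (hK : Convex ℝ K) (hgK : ∀ j, ∀ p ∈ K, 0 ≤ g j p) {xs z : E}
    (hxs : xs ∈ K) (hnd : ∀ j, g j xs = 0 → gradient (g j) xs ≠ 0) (hz : z ∈ interior K)
    {μ : α → ℝ} (hμ : ∀ a, 0 ≤ μ a) (hμ0 : Tendsto μ l (𝓝 0)) {x : α → E}
    (hfeas : ∀ a j, 0 ≤ g j (x a))
    (hstat : ∀ a, gradient f (x a) = ∑ j, (μ a / g j (x a)) • gradient (g j) (x a))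
    (hlim : Tendsto x l (𝓝 xs)) :
    0 ≤ ⟪gradient f xs, z - xs⟫ := by
  have hinner : Tendsto (fun a => ⟪gradient f (x a), z - x a⟫) l (𝓝 ⟪gradient f xs, z - xs⟫) :=
    ((hf.continuous_gradient.tendsto xs).comp hlim).inner (tendsto_const_nhds.sub hlim)
  refine nonneg_of_tendsto_finset_sum (s := Finset.univ) (fun j _ =>
    barrier_term_eventually_nonneg_or_tendsto_zero (hg j) hK (hgK j) hxs (hnd j) hz hμ hμ0
      (fun a => hfeas a j) hlim) ?_
  simpa only [hstat, sum_inner, real_inner_smul_left] using hinner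

end Gradient

theorem barrier_stationary_limit_global_min_general (n m : ℕ)
    (g : Fin m → EuclideanSpace ℝ (Fin n) → ℝ)
    (f : EuclideanSpace ℝ (Fin n) → ℝ)
    (hg : ∀ j, ContDiff ℝ 1 (g j)) (hf : ContDiff ℝ 1 f)
    (hfconv : ConvexOn ℝ Set.univ f)
    (K : Set (EuclideanSpace ℝ (Fin n)))
    (hKdef : K = {x | ∀ j, 0 ≤ g j x})
    (hKconv : Convex ℝ K)
    (nondeg : ∀ j, ∀ x ∈ K, g j x = 0 → gradient (g j) x ≠ 0)
    (μ : ℕ → ℝ) (hμpos : ∀ ℓ, 0 < μ ℓ)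
    (hμ0 : Tendsto μ atTop (nhds 0))
    (x : ℕ → EuclideanSpace ℝ (Fin n))
    (hfeas : ∀ ℓ j, 0 < g j (x ℓ))
    (hstat : ∀ ℓ, gradient f (x ℓ) =
      ∑ j, (μ ℓ / g j (x ℓ)) • gradient (g j) (x ℓ))
    (xs : EuclideanSpace ℝ (Fin n)) (hxs : xs ∈ K)
    (hlim : Tendsto x atTop (nhds xs)) :
    ∀ y ∈ K, f xs ≤ f y := by
  have hgK : ∀ j, ∀ p ∈ K, 0 ≤ g j p := by
    subst hKdef
    exact fun j p hp => hp j
  have hstrict_open : IsOpen {p | ∀ j, 0 < g j p} := by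
    simp only [ofPred_forall]
    exact isOpen_iInter_of_finite fun j => isOpen_lt continuous_const (hg j).continuous
  have hint : (interior K).Nonempty :=
    ⟨x 0, interior_maximal (fun p hp => hKdef ▸ fun j => (hp j).le) hstrict_open (hfeas 0)⟩
  refine hKconv.forall_le_of_forall_mem_interior_le hint hf.continuous fun z hz => ?_
  have hgrad := barrier_limit_inner_gradient_nonneg hg hf hKconv hgK hxs (nondeg · xs hxs) hz
    (fun ℓ => (hμpos ℓ).le) hμ0 (fun ℓ j => (hfeas ℓ j).le) hstat hlim
  have hsupport :=
    hfconv.fderiv_sub_le (mem_univ xs) (mem_univ z) (hf.differentiable one_ne_zero xs)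
  rw [← inner_gradient_left] at hsupport
  linarith

theorem barrier_stationary_limit_global_min (n m : ℕ)
    (g : Fin m → EuclideanSpace ℝ (Fin n) → ℝ)
    (f : EuclideanSpace ℝ (Fin n) → ℝ)
    (hg : ∀ j, ContDiff ℝ 1 (g j)) (hf : ContDiff ℝ 1 f)
    (hfconv : ConvexOn ℝ Set.univ f)
    (K : Set (EuclideanSpace ℝ (Fin n)))
    (hKdef : K = {x | ∀ j, 0 ≤ g j x})
    (hKconv : Convex ℝ K) (hKcomp : IsCompact K)
    (slater : ∃ x₀, ∀ j, 0 < g j x₀)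
    (nondeg : ∀ j, ∀ x ∈ K, g j x = 0 → gradient (g j) x ≠ 0)
    (μ : ℕ → ℝ) (hμpos : ∀ ℓ, 0 < μ ℓ)
    (hμ0 : Tendsto μ atTop (nhds 0))
    (x : ℕ → EuclideanSpace ℝ (Fin n))
    (hfeas : ∀ ℓ j, 0 < g j (x ℓ))
    (hstat : ∀ ℓ, gradient f (x ℓ) =
      ∑ j, (μ ℓ / g j (x ℓ)) • gradient (g j) (x ℓ))
    (xs : EuclideanSpace ℝ (Fin n)) (hxs : xs ∈ K)
    (hlim : Tendsto x atTop (nhds xs)) :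
    ∀ y ∈ K, f xs ≤ f y :=
  barrier_stationary_limit_global_min_general n m g f hg hf hfconv K hKdef hKconv nondeg μ hμpos hμ0
    x hfeas hstat xs hxs hlim
end

section
/- Let K = {x ∈ ℝⁿ : gⱼ(x) ≥ 0, j = 1,…,m} be convex and compact with each gⱼ ∈ C¹, Slater's condition and nondegeneracy holding, and f convex C¹. If (x_{μ_ℓ}) are stationary points of the log-barrier with μ_ℓ → 0 converging to x* ∈ K, and ∇f(x*) ≠ 0, then x* is a KKT point: there exists λ ∈ ℝ^m with λ ≥ 0, λⱼ gⱼ(x*) = 0 for all j, and ∇f(x*) = ∑ⱼ λⱼ ∇gⱼ(x*). -/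
/-!
Put `λ_ℓ j = μ_ℓ / g_j(x_ℓ) ≥ 0`, so that stationarity reads `∇f(x_ℓ) = ∑ⱼ λ_ℓ j ∇g_j(x_ℓ)`.
For an inactive constraint, `g_j(x*) > 0`, the multipliers `λ_ℓ j` tend to `0`. For an active
one, `x*` minimises `g_j` over the convex set `K`, so the nonzero vector `∇g_j(x*)` has nonnegative
inner product with `K - x*`, hence a positive one with `d = x₀ - x*` for the Slater point
`x₀ ∈ interior K`. Pairing the stationarity equation with `d` therefore bounds every
multiplier, and a convergent subsequence of `(λ_ℓ)` yields the KKT multipliers.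
-/

open Filter Topology
open scoped RealInnerProductSpace

section Gradient

variable {E : Type*} [NormedAddCommGroup E] [InnerProductSpace ℝ E]

theorem ContDiff.continuous_gradient_s2 [CompleteSpace E] {h : E → ℝ} (hh : ContDiff ℝ 1 h) :
    Continuous (gradient h) :=
  (InnerProductSpace.toDual ℝ E).symm.continuous.comp (hh.continuous_fderiv one_ne_zero)

theorem IsMinOn.inner_gradient_sub_nonneg [CompleteSpace E] {h : E → ℝ} {K : Set E} {a y : E}
    (hmin : IsMinOn h K a) (hK : Convex ℝ K) (ha : a ∈ K) (hy : y ∈ K)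
    (hd : DifferentiableAt ℝ h a) : 0 ≤ ⟪gradient h a, y - a⟫ := by
  rw [inner_gradient_left]
  exact hmin.localize.hasFDerivWithinAt_nonneg hd.hasFDerivAt.hasFDerivWithinAt
    (sub_mem_posTangentConeAt_of_segment_subset (hK.segment_subset ha hy))

/-- If `⟪v, x - a⟫` vanished, `x` would be an unconstrained local minimum of `⟪v, ·⟫`,
forcing `v = 0`. -/
theorem inner_sub_pos_of_mem_interior_s2 {K : Set E} {v a x : E} (hv : v ≠ 0)
    (hK : ∀ y ∈ K, 0 ≤ ⟪v, y - a⟫) (hx : x ∈ interior K) : 0 < ⟪v, x - a⟫ := by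
  refine (hK x (interior_subset hx)).lt_of_ne fun h0 => hv ?_
  have hmin : IsLocalMin (fun y => ⟪v, y⟫) x := by
    filter_upwards [mem_interior_iff_mem_nhds.1 hx] with y hy
    have := hK y hy
    rw [inner_sub_right] at this h0
    linarith
  have hzero := hmin.hasFDerivAt_eq_zero (innerSL ℝ v).hasFDerivAt
  simpa using congr($hzero v)

theorem IsMinOn.inner_gradient_sub_pos [CompleteSpace E] {h : E → ℝ} {K : Set E} {a x : E}
    (hmin : IsMinOn h K a) (hK : Convex ℝ K) (ha : a ∈ K) (hd : DifferentiableAt ℝ h a)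
    (hx : x ∈ interior K) (hgrad : gradient h a ≠ 0) : 0 < ⟪gradient h a, x - a⟫ :=
  inner_sub_pos_of_mem_interior_s2 hgrad (fun _ hy => hmin.inner_gradient_sub_nonneg hK ha hy hd) hx

end Gradient

theorem mem_interior_setOf_forall_nonneg {X ι : Type*} [TopologicalSpace X] [Finite ι]
    {g : ι → X → ℝ} (hg : ∀ j, Continuous (g j)) {x : X} (hx : ∀ j, 0 < g j x) :
    x ∈ interior {y | ∀ j, 0 ≤ g j y} :=
  mem_interior_iff_mem_nhds.2 <| Filter.mem_of_superset
    (eventually_all.2 fun j => (hg j).continuousAt.eventually (lt_mem_nhds (hx j)))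
    fun _ hy j => (hy j).le

section Multipliers

variable {ι : Type*} [Fintype ι]

theorem isBoundedUnder_le_of_sum_mul {α : Type*} {l : Filter α} {c a : α → ι → ℝ} {b : ι → ℝ}
    (hc : ∀ x j, 0 ≤ c x j) (ha : ∀ j, Tendsto (fun x => a x j) l (𝓝 (b j)))
    (hsum : IsBoundedUnder (· ≤ ·) l fun x => ∑ j, c x j * a x j)
    (hb : ∀ j, 0 < b j ∨ Tendsto (fun x => c x j) l (𝓝 0)) (j : ι) :
    IsBoundedUnder (· ≤ ·) l fun x => c x j := by
  have hterm : ∀ᶠ x in l, ∀ i, -1 ≤ c x i * a x i := by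
    refine eventually_all.2 fun i => ?_
    rcases hb i with hbi | hci
    · filter_upwards [(ha i).eventually (lt_mem_nhds hbi)] with x hx
      nlinarith [hc x i]
    · have hprod := hci.mul (ha i)
      rw [zero_mul] at hprod
      filter_upwards [hprod.eventually (lt_mem_nhds neg_one_lt_zero)] with x hx
      exact hx.le
  rcases hb j with hbj | hcj
  · obtain ⟨T, hT⟩ := hsum
    refine ⟨(T + Fintype.card ι) / (b j / 2), ?_⟩
    rw [eventually_map] at hT ⊢
    filter_upwards [hT, hterm, (ha j).eventually (lt_mem_nhds (half_lt_self hbj))]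
      with x hTx htx hax
    have hsingle : c x j * a x j + 1 ≤ ∑ i, (c x i * a x i + 1) :=
      Finset.single_le_sum (f := fun i => c x i * a x i + 1) (fun i _ => by linarith [htx i])
        (Finset.mem_univ j)
    rw [Finset.sum_add_distrib, Finset.sum_const, Finset.card_univ, nsmul_one] at hsingle
    rw [le_div_iff₀ (half_pos hbj)]
    nlinarith [hc x j]
  · exact hcj.isBoundedUnder_le

theorem exists_nonneg_coeffs_of_tendsto {E : Type*} [TopologicalSpace E] [T2Space E]
    [AddCommMonoid E] [ContinuousAdd E] [Module ℝ E] [ContinuousSMul ℝ E]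
    {c : ℕ → ι → ℝ} {v : ℕ → E} {w : ℕ → ι → E} {v₀ : E} {w₀ : ι → E}
    (hc : ∀ ℓ j, 0 ≤ c ℓ j) (hbdd : ∀ j, IsBoundedUnder (· ≤ ·) atTop fun ℓ => c ℓ j)
    (hv : Tendsto v atTop (𝓝 v₀)) (hw : ∀ j, Tendsto (fun ℓ => w ℓ j) atTop (𝓝 (w₀ j)))
    (heq : ∀ ℓ, v ℓ = ∑ j, c ℓ j • w ℓ j) :
    ∃ c₀ : ι → ℝ, (∀ j, 0 ≤ c₀ j) ∧ (∀ j, Tendsto (fun ℓ => c ℓ j) atTop (𝓝 0) → c₀ j = 0) ∧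
      v₀ = ∑ j, c₀ j • w₀ j := by
  choose B hB using hbdd
  have hbox : ∀ᶠ ℓ in atTop, c ℓ ∈ Set.univ.pi fun j => Set.Icc 0 (B j) := by
    filter_upwards [eventually_all.2 hB] with ℓ hℓ
    exact fun j _ => ⟨hc ℓ j, hℓ j⟩
  obtain ⟨c₀, hc₀, φ, hφ, hlim⟩ :=
    (isCompact_univ_pi fun j => isCompact_Icc).tendsto_subseq' hbox.frequently
  have hcoord : ∀ j, Tendsto (fun ℓ => c (φ ℓ) j) atTop (𝓝 (c₀ j)) := tendsto_pi_nhds.1 hlim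
  refine ⟨c₀, fun j => (hc₀ j (Set.mem_univ j)).1,
    fun j hcj => tendsto_nhds_unique (hcoord j) (hcj.comp hφ.tendsto_atTop), ?_⟩
  refine tendsto_nhds_unique (hv.comp hφ.tendsto_atTop) ?_
  simp_rw [Function.comp_def, heq]
  exact tendsto_finsetSum _ fun j _ => (hcoord j).smul ((hw j).comp hφ.tendsto_atTop)

end Multipliers

theorem barrier_stationary_limit_KKT_general (n m : ℕ)
    (g : Fin m → EuclideanSpace ℝ (Fin n) → ℝ)
    (f : EuclideanSpace ℝ (Fin n) → ℝ)
    (hg : ∀ j, ContDiff ℝ 1 (g j)) (hf : ContDiff ℝ 1 f)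
    (K : Set (EuclideanSpace ℝ (Fin n)))
    (hKdef : K = {x | ∀ j, 0 ≤ g j x})
    (hKconv : Convex ℝ K)
    (slater : ∃ x₀, ∀ j, 0 < g j x₀)
    (nondeg : ∀ j, ∀ x ∈ K, g j x = 0 → gradient (g j) x ≠ 0)
    (μ : ℕ → ℝ) (hμpos : ∀ ℓ, 0 < μ ℓ)
    (hμ0 : Tendsto μ atTop (nhds 0))
    (x : ℕ → EuclideanSpace ℝ (Fin n))
    (hfeas : ∀ ℓ j, 0 < g j (x ℓ))
    (hstat : ∀ ℓ, gradient f (x ℓ) =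
      ∑ j, (μ ℓ / g j (x ℓ)) • gradient (g j) (x ℓ))
    (xs : EuclideanSpace ℝ (Fin n)) (hxs : xs ∈ K)
    (hlim : Tendsto x atTop (nhds xs)) :
    ∃ l : Fin m → ℝ, (∀ j, 0 ≤ l j) ∧ (∀ j, l j * g j xs = 0) ∧
      gradient f xs = ∑ j, l j • gradient (g j) xs := by
  subst hKdef
  obtain ⟨x₀, hx₀⟩ := slater
  have hx₀K := mem_interior_setOf_forall_nonneg (fun j => (hg j).continuous) hx₀
  set lam : ℕ → Fin m → ℝ := fun ℓ j => μ ℓ / g j (x ℓ)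
  have hlam : ∀ ℓ j, 0 ≤ lam ℓ j := fun ℓ j => (div_pos (hμpos ℓ) (hfeas ℓ j)).le
  have hgrad_lim {h : EuclideanSpace ℝ (Fin n) → ℝ} (hh : ContDiff ℝ 1 h) :
      Tendsto (fun ℓ => gradient h (x ℓ)) atTop (𝓝 (gradient h xs)) :=
    (hh.continuous_gradient_s2.tendsto xs).comp hlim
  have hinactive : ∀ j, 0 < g j xs → Tendsto (fun ℓ => lam ℓ j) atTop (𝓝 0) := fun j hj => by
    have h := hμ0.div (((hg j).continuous.tendsto xs).comp hlim) hj.ne'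
    rwa [zero_div] at h
  have hactive : ∀ j, g j xs = 0 → 0 < ⟪gradient (g j) xs, x₀ - xs⟫ := fun j hj =>
    IsMinOn.inner_gradient_sub_pos (fun y (hy : ∀ i, 0 ≤ g i y) => hj ▸ hy j) hKconv hxs
      ((hg j).differentiable one_ne_zero xs) hx₀K (nondeg j xs hxs hj)
  have hpaired : ∀ ℓ, ⟪gradient f (x ℓ), x₀ - xs⟫ =
      ∑ j, lam ℓ j * ⟪gradient (g j) (x ℓ), x₀ - xs⟫ := fun ℓ => by
    simp only [hstat ℓ, sum_inner, real_inner_smul_left, lam]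
  have hbdd := isBoundedUnder_le_of_sum_mul hlam
    (fun j => (hgrad_lim (hg j)).inner tendsto_const_nhds)
    (funext hpaired ▸ ((hgrad_lim hf).inner tendsto_const_nhds).isBoundedUnder_le)
    fun j => (hxs j).eq_or_lt.imp (fun hj => hactive j hj.symm) (hinactive j)
  obtain ⟨l, hl, hlzero, hleq⟩ :=
    exists_nonneg_coeffs_of_tendsto hlam hbdd (hgrad_lim hf) (fun j => hgrad_lim (hg j)) hstat
  refine ⟨l, hl, fun j => ?_, hleq⟩
  rcases (hxs j).eq_or_lt with hj | hj
  · rw [← hj, mul_zero]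
  · rw [hlzero j (hinactive j hj), zero_mul]

theorem barrier_stationary_limit_KKT (n m : ℕ)
    (g : Fin m → EuclideanSpace ℝ (Fin n) → ℝ)
    (f : EuclideanSpace ℝ (Fin n) → ℝ)
    (hg : ∀ j, ContDiff ℝ 1 (g j)) (hf : ContDiff ℝ 1 f)
    (hfconv : ConvexOn ℝ Set.univ f)
    (K : Set (EuclideanSpace ℝ (Fin n)))
    (hKdef : K = {x | ∀ j, 0 ≤ g j x})
    (hKconv : Convex ℝ K) (hKcomp : IsCompact K)
    (slater : ∃ x₀, ∀ j, 0 < g j x₀)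
    (nondeg : ∀ j, ∀ x ∈ K, g j x = 0 → gradient (g j) x ≠ 0)
    (μ : ℕ → ℝ) (hμpos : ∀ ℓ, 0 < μ ℓ)
    (hμ0 : Tendsto μ atTop (nhds 0))
    (x : ℕ → EuclideanSpace ℝ (Fin n))
    (hfeas : ∀ ℓ j, 0 < g j (x ℓ))
    (hstat : ∀ ℓ, gradient f (x ℓ) =
      ∑ j, (μ ℓ / g j (x ℓ)) • gradient (g j) (x ℓ))
    (xs : EuclideanSpace ℝ (Fin n)) (hxs : xs ∈ K)
    (hlim : Tendsto x atTop (nhds xs))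
    (hgrad : gradient f xs ≠ 0) :
    ∃ l : Fin m → ℝ, (∀ j, 0 ≤ l j) ∧ (∀ j, l j * g j xs = 0) ∧
      gradient f xs = ∑ j, l j • gradient (g j) xs :=
  barrier_stationary_limit_KKT_general n m g f hg hf K hKdef hKconv slater nondeg μ hμpos hμ0 x
    hfeas hstat xs hxs hlim
end

section
/- Let f : ℝⁿ → ℝ be convex and continuously differentiable and K ⊂ ℝⁿ any set. If x ∈ K, λ ∈ ℝ^m with λ ≥ 0, gⱼ : ℝⁿ → ℝ are C¹ with gⱼ ≥ 0 on K (so K ⊂ {x : gⱼ(x) ≥ 0} for each j), λⱼ gⱼ(x) = 0 for all j, ∇f(x) = ∑ⱼ λⱼ ∇gⱼ(x), and each set {y : gⱼ(y) ≥ 0} with λⱼ > 0 is convex with ∇gⱼ(x) ≠ 0, then ⟨∇f(x), y − x⟩ ≥ 0 for all y ∈ K, hence x minimizes f on K. -/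
/-!
A constraint with a positive multiplier is active, so `x` minimizes `gⱼ` on the convex set
`{gⱼ ≥ 0} ⊇ K`; first-order optimality on a convex set gives `⟪∇gⱼ x, y - x⟫ ≥ 0` for `y ∈ K`.
Stationarity makes `⟪∇f x, y - x⟫` a nonnegative combination of these, and the gradient
inequality of the convex function `f` turns this into `f x ≤ f y`.
-/

open Set
open scoped RealInnerProductSpace

section NormedSpace

variable {E : Type*} [NormedAddCommGroup E] [NormedSpace ℝ E]

theorem ConvexOn.hasFDerivAt_apply_sub_le {f : E → ℝ} {f' : E →L[ℝ] ℝ} {x : E}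
    (hf : ConvexOn ℝ univ f) (hfx : HasFDerivAt f f' x) (y : E) :
    f' (y - x) ≤ f y - f x := by
  have hline : ConvexOn ℝ univ (f ∘ AffineMap.lineMap (k := ℝ) x y) := hf.comp_affineMap _
  have hderiv : HasDerivAt (f ∘ AffineMap.lineMap (k := ℝ) x y) (f' (y - x)) 0 := by
    refine HasFDerivAt.comp_hasDerivAt (0 : ℝ) ?_ AffineMap.hasDerivAt_lineMap
    simpa using hfx
  simpa [slope] using hline.le_slope_of_hasDerivAt (mem_univ 0) (mem_univ 1) zero_lt_one hderiv

theorem IsMinOn.hasFDerivAt_apply_sub_nonneg {g : E → ℝ} {g' : E →L[ℝ] ℝ} {s : Set E} {x y : E}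
    (hmin : IsMinOn g s x) (hs : Convex ℝ s) (hx : x ∈ s) (hy : y ∈ s)
    (hgx : HasFDerivAt g g' x) : 0 ≤ g' (y - x) :=
  hmin.localize.hasFDerivWithinAt_nonneg hgx.hasFDerivWithinAt
    (sub_mem_posTangentConeAt_of_segment_subset (hs.segment_subset hx hy))

end NormedSpace

section InnerProductSpace

variable {F : Type*} [NormedAddCommGroup F] [InnerProductSpace ℝ F] [CompleteSpace F]

theorem ConvexOn.inner_gradient_sub_le {f : F → ℝ} {x : F} (hf : ConvexOn ℝ univ f)
    (hfx : DifferentiableAt ℝ f x) (y : F) : ⟪gradient f x, y - x⟫ ≤ f y - f x := by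
  simpa using hf.hasFDerivAt_apply_sub_le hfx.hasGradientAt.hasFDerivAt y

theorem inner_gradient_sub_nonneg_of_convex_superlevel {g : F → ℝ} {x y : F}
    (hconv : Convex ℝ {z | 0 ≤ g z}) (hgx : DifferentiableAt ℝ g x) (hx : g x = 0)
    (hy : 0 ≤ g y) : 0 ≤ ⟪gradient g x, y - x⟫ := by
  have hmin : IsMinOn g {z | 0 ≤ g z} x := fun z hz => by simpa [hx] using hz
  simpa using hmin.hasFDerivAt_apply_sub_nonneg hconv hx.ge hy hgx.hasGradientAt.hasFDerivAt

theorem inner_gradient_sub_nonneg_of_kkt {ι : Type*} [Fintype ι] {f : F → ℝ} {g : ι → F → ℝ}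
    {K : Set F} {x y : F} {l : ι → ℝ} (hg : ∀ j, DifferentiableAt ℝ (g j) x)
    (hgK : ∀ j, ∀ z ∈ K, 0 ≤ g j z) (hl : ∀ j, 0 ≤ l j) (hcs : ∀ j, l j * g j x = 0)
    (hstat : gradient f x = ∑ j, l j • gradient (g j) x)
    (hconv : ∀ j, 0 < l j → Convex ℝ {z | 0 ≤ g j z}) (hy : y ∈ K) :
    0 ≤ ⟪gradient f x, y - x⟫ := by
  rw [hstat, sum_inner]
  refine Finset.sum_nonneg fun j _ => ?_
  rw [real_inner_smul_left]
  rcases (hl j).eq_or_lt with hzero | hpos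
  · simp [← hzero]
  · have hactive : g j x = 0 := (mul_eq_zero.1 (hcs j)).resolve_left hpos.ne'
    exact mul_nonneg hpos.le <|
      inner_gradient_sub_nonneg_of_convex_superlevel (hconv j hpos) (hg j) hactive (hgK j y hy)

end InnerProductSpace

theorem KKT_sufficiency_general (n m : ℕ)
    (f : EuclideanSpace ℝ (Fin n) → ℝ)
    (hf : ContDiff ℝ 1 f) (hfconv : ConvexOn ℝ Set.univ f)
    (K : Set (EuclideanSpace ℝ (Fin n)))
    (g : Fin m → EuclideanSpace ℝ (Fin n) → ℝ)
    (hg : ∀ j, ContDiff ℝ 1 (g j))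
    (hgK : ∀ j, ∀ y ∈ K, 0 ≤ g j y)
    (x : EuclideanSpace ℝ (Fin n))
    (l : Fin m → ℝ) (hl : ∀ j, 0 ≤ l j)
    (hcs : ∀ j, l j * g j x = 0)
    (hstat : gradient f x = ∑ j, l j • gradient (g j) x)
    (hconv : ∀ j, 0 < l j → Convex ℝ {y | 0 ≤ g j y} ∧ gradient (g j) x ≠ 0) :
    (∀ y ∈ K, 0 ≤ ⟪gradient f x, y - x⟫) ∧ ∀ y ∈ K, f x ≤ f y := by
  have hvariational : ∀ y ∈ K, 0 ≤ ⟪gradient f x, y - x⟫ := fun y hy =>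
    inner_gradient_sub_nonneg_of_kkt (fun j => (hg j).differentiable one_ne_zero x) hgK hl hcs
      hstat (fun j hj => (hconv j hj).1) hy
  refine ⟨hvariational, fun y hy => ?_⟩
  have hsupport := hfconv.inner_gradient_sub_le (hf.differentiable one_ne_zero x) y
  linarith [hvariational y hy]

theorem KKT_sufficiency (n m : ℕ)
    (f : EuclideanSpace ℝ (Fin n) → ℝ)
    (hf : ContDiff ℝ 1 f) (hfconv : ConvexOn ℝ Set.univ f)
    (K : Set (EuclideanSpace ℝ (Fin n)))
    (g : Fin m → EuclideanSpace ℝ (Fin n) → ℝ)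
    (hg : ∀ j, ContDiff ℝ 1 (g j))
    (hgK : ∀ j, ∀ y ∈ K, 0 ≤ g j y)
    (x : EuclideanSpace ℝ (Fin n)) (hx : x ∈ K)
    (l : Fin m → ℝ) (hl : ∀ j, 0 ≤ l j)
    (hcs : ∀ j, l j * g j x = 0)
    (hstat : gradient f x = ∑ j, l j • gradient (g j) x)
    (hconv : ∀ j, 0 < l j → Convex ℝ {y | 0 ≤ g j y} ∧ gradient (g j) x ≠ 0) :
    (∀ y ∈ K, 0 ≤ ⟪gradient f x, y - x⟫) ∧ ∀ y ∈ K, f x ≤ f y :=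
  KKT_sufficiency_general n m f hf hfconv K g hg hgK x l hl hcs hstat hconv
end

section
/- The set K_a = {x ∈ ℝ² : 4 − ((x₁+1)² + x₂²)((x₁−1)² + x₂²) ≥ a} is convex for a = 0 but not convex for a = 2.5; that is, there exist p, q ∈ K_{2.5} with (p+q)/2 ∉ K_{2.5}. -/
private theorem sqrt_conv_aux (x1 x2 a b : ℝ) (ha : 0 ≤ a) (hb : 0 ≤ b) (hab : a + b = 1) :
    Real.sqrt (1 + (a*x1 + b*x2)^2) ≤ a * Real.sqrt (1 + x1^2) + b * Real.sqrt (1 + x2^2) := by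
  set A := Real.sqrt (1 + x1^2) with hA
  set B := Real.sqrt (1 + x2^2) with hB
  have hA0 : 0 ≤ A := Real.sqrt_nonneg _
  have hB0 : 0 ≤ B := Real.sqrt_nonneg _
  have hA2 : A^2 = 1 + x1^2 := Real.sq_sqrt (by positivity)
  have hB2 : B^2 = 1 + x2^2 := Real.sq_sqrt (by positivity)
  have hAB : 1 + x1*x2 ≤ A*B := by
    nlinarith [mul_nonneg hA0 hB0, sq_nonneg (x1 - x2), sq_nonneg (A*B - 1 - x1*x2),
      sq_nonneg (A*B + 1 + x1*x2)]
  have h := mul_nonneg (mul_nonneg ha hb) (by linarith : (0:ℝ) ≤ A*B - 1 - x1*x2)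
  have e : (a*A + b*B)^2 - (1 + (a*x1 + b*x2)^2) = 2*(a*b*(A*B - 1 - x1*x2)) := by
    linear_combination a^2*hA2 + b^2*hB2 + (a+b+1)*hab
  calc Real.sqrt (1 + (a*x1 + b*x2)^2)
      ≤ Real.sqrt ((a*A + b*B)^2) := Real.sqrt_le_sqrt (by linarith)
    _ = a*A + b*B := Real.sqrt_sq (by positivity)

private theorem sqrt_conc_aux (y1 y2 a b : ℝ) (ha : 0 ≤ a) (hb : 0 ≤ b) (hab : a + b = 1)
    (h1 : y1^2 ≤ 1) (h2 : y2^2 ≤ 1) :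
    a * Real.sqrt (1 - y1^2) + b * Real.sqrt (1 - y2^2) ≤ Real.sqrt (1 - (a*y1 + b*y2)^2) := by
  set V1 := Real.sqrt (1 - y1^2) with hV1
  set V2 := Real.sqrt (1 - y2^2) with hV2
  have hV10 : 0 ≤ V1 := Real.sqrt_nonneg _
  have hV20 : 0 ≤ V2 := Real.sqrt_nonneg _
  have hV12 : V1^2 = 1 - y1^2 := Real.sq_sqrt (by linarith)
  have hV22 : V2^2 = 1 - y2^2 := Real.sq_sqrt (by linarith)
  have hVV : V1*V2 ≤ 1 - y1*y2 := by
    nlinarith [mul_nonneg hV10 hV20, sq_nonneg (y1 - y2), sq_nonneg (V1*V2 - (1 - y1*y2)),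
      sq_nonneg (V1*V2 + 1 - y1*y2)]
  have h := mul_nonneg (mul_nonneg ha hb) (by linarith : (0:ℝ) ≤ 1 - y1*y2 - V1*V2)
  have e : (1 - (a*y1 + b*y2)^2) - (a*V1 + b*V2)^2 = 2*(a*b*(1 - y1*y2 - V1*V2)) := by
    linear_combination (-(a^2))*hV12 + (-(b^2))*hV22 + (-(a+b+1))*hab
  calc a*V1 + b*V2 = Real.sqrt ((a*V1 + b*V2)^2) := (Real.sqrt_sq (by positivity)).symm
    _ ≤ Real.sqrt (1 - (a*y1 + b*y2)^2) := Real.sqrt_le_sqrt (by linarith)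

private theorem cassini_iff (x y : ℝ) :
    (0:ℝ) ≤ 4 - ((x + 1) ^ 2 + y ^ 2) * ((x - 1) ^ 2 + y ^ 2) ↔
      y ^ 2 ≤ 1 ∧ Real.sqrt (1 + x ^ 2) ≤ 1 + Real.sqrt (1 - y ^ 2) := by
  have hu0 : (0:ℝ) ≤ Real.sqrt (1 + x ^ 2) := Real.sqrt_nonneg _
  have hu2 : Real.sqrt (1 + x ^ 2) ^ 2 = 1 + x ^ 2 := Real.sq_sqrt (by positivity)
  have hu1 : 1 ≤ Real.sqrt (1 + x ^ 2) := by nlinarith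
  constructor
  · intro h
    have hy : y ^ 2 ≤ 1 := by
      nlinarith [sq_nonneg x, sq_nonneg (x^2 + y^2), sq_nonneg (x^2 - 1), sq_nonneg (x^2 + 1)]
    have hv0 : (0:ℝ) ≤ Real.sqrt (1 - y ^ 2) := Real.sqrt_nonneg _
    have hv2 : Real.sqrt (1 - y ^ 2) ^ 2 = 1 - y ^ 2 := Real.sq_sqrt (by linarith)
    refine ⟨hy, ?_⟩
    nlinarith [sq_nonneg (Real.sqrt (1 + x ^ 2) - 1 - Real.sqrt (1 - y ^ 2)),
      sq_nonneg (Real.sqrt (1 + x ^ 2) + 1 + Real.sqrt (1 - y ^ 2)),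
      mul_nonneg hu0 hv0]
  · rintro ⟨hy, h⟩
    have hv0 : (0:ℝ) ≤ Real.sqrt (1 - y ^ 2) := Real.sqrt_nonneg _
    have hv2 : Real.sqrt (1 - y ^ 2) ^ 2 = 1 - y ^ 2 := Real.sq_sqrt (by linarith)
    have h1 : (Real.sqrt (1 + x ^ 2) - 1)^2 ≤ Real.sqrt (1 - y ^ 2) ^ 2 := by nlinarith
    have h2 : x^2 + y^2 + 1 ≤ 2 * Real.sqrt (1 + x ^ 2) := by nlinarith
    nlinarith [sq_nonneg (x^2 + y^2 + 1)]

theorem cassini_superlevel_convex_accident :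
    Convex ℝ {x : ℝ × ℝ |
      (0:ℝ) ≤ 4 - ((x.1 + 1) ^ 2 + x.2 ^ 2) * ((x.1 - 1) ^ 2 + x.2 ^ 2)} ∧
    (¬ Convex ℝ {x : ℝ × ℝ |
      (2.5:ℝ) ≤ 4 - ((x.1 + 1) ^ 2 + x.2 ^ 2) * ((x.1 - 1) ^ 2 + x.2 ^ 2)}) ∧
    ∃ p q : ℝ × ℝ,
      p ∈ {x : ℝ × ℝ |
        (2.5:ℝ) ≤ 4 - ((x.1 + 1) ^ 2 + x.2 ^ 2) * ((x.1 - 1) ^ 2 + x.2 ^ 2)} ∧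
      q ∈ {x : ℝ × ℝ |
        (2.5:ℝ) ≤ 4 - ((x.1 + 1) ^ 2 + x.2 ^ 2) * ((x.1 - 1) ^ 2 + x.2 ^ 2)} ∧
      (1/2 : ℝ) • (p + q) ∉ {x : ℝ × ℝ |
        (2.5:ℝ) ≤ 4 - ((x.1 + 1) ^ 2 + x.2 ^ 2) * ((x.1 - 1) ^ 2 + x.2 ^ 2)} := by
  have hp : ((1:ℝ), (11/20:ℝ)) ∈ {x : ℝ × ℝ |
      (2.5:ℝ) ≤ 4 - ((x.1 + 1) ^ 2 + x.2 ^ 2) * ((x.1 - 1) ^ 2 + x.2 ^ 2)} := by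
    simp only [Set.mem_setOf_eq]; norm_num
  have hq : ((-1:ℝ), (11/20:ℝ)) ∈ {x : ℝ × ℝ |
      (2.5:ℝ) ≤ 4 - ((x.1 + 1) ^ 2 + x.2 ^ 2) * ((x.1 - 1) ^ 2 + x.2 ^ 2)} := by
    simp only [Set.mem_setOf_eq]; norm_num
  have hmid : ((1/2 : ℝ) • (((1:ℝ), (11/20:ℝ)) + ((-1:ℝ), (11/20:ℝ)))) ∉ {x : ℝ × ℝ |
      (2.5:ℝ) ≤ 4 - ((x.1 + 1) ^ 2 + x.2 ^ 2) * ((x.1 - 1) ^ 2 + x.2 ^ 2)} := by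
    simp only [Set.mem_setOf_eq, Prod.smul_mk, Prod.mk_add_mk, smul_eq_mul]
    norm_num
  refine ⟨?_, ?_, ((1:ℝ), (11/20:ℝ)), ((-1:ℝ), (11/20:ℝ)), hp, hq, hmid⟩
  · -- convexity of K₀
    intro p hp' q hq' a b ha hb hab
    simp only [Set.mem_setOf_eq] at hp' hq' ⊢
    rw [cassini_iff] at hp' hq'
    rw [show (a • p + b • q).1 = a * p.1 + b * q.1 from rfl,
        show (a • p + b • q).2 = a * p.2 + b * q.2 from rfl]
    rw [cassini_iff]
    obtain ⟨hy1, h1⟩ := hp'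
    obtain ⟨hy2, h2⟩ := hq'
    constructor
    · nlinarith [mul_nonneg (mul_nonneg ha hb) (sq_nonneg (p.2 - q.2)),
        mul_nonneg ha (by linarith : (0:ℝ) ≤ 1 - p.2^2),
        mul_nonneg hb (by linarith : (0:ℝ) ≤ 1 - q.2^2)]
    · have c1 := sqrt_conv_aux p.1 q.1 a b ha hb hab
      have c2 := sqrt_conc_aux p.2 q.2 a b ha hb hab hy1 hy2
      have m1 : a * Real.sqrt (1 + p.1^2) ≤ a * (1 + Real.sqrt (1 - p.2^2)) :=
        mul_le_mul_of_nonneg_left h1 ha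
      have m2 : b * Real.sqrt (1 + q.1^2) ≤ b * (1 + Real.sqrt (1 - q.2^2)) :=
        mul_le_mul_of_nonneg_left h2 hb
      calc Real.sqrt (1 + (a * p.1 + b * q.1)^2)
          ≤ a * Real.sqrt (1 + p.1^2) + b * Real.sqrt (1 + q.1^2) := c1
        _ ≤ a * (1 + Real.sqrt (1 - p.2^2)) + b * (1 + Real.sqrt (1 - q.2^2)) := by linarith
        _ = 1 + (a * Real.sqrt (1 - p.2^2) + b * Real.sqrt (1 - q.2^2)) := by ring_nf; linarith
        _ ≤ 1 + Real.sqrt (1 - (a * p.2 + b * q.2)^2) := by linarith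
  · -- nonconvexity of K₂.₅
    intro hconv
    have := hconv hp hq (by norm_num : (0:ℝ) ≤ 1/2) (by norm_num : (0:ℝ) ≤ 1/2)
      (by norm_num : (1/2:ℝ) + 1/2 = 1)
    apply hmid
    have heq : (1/2 : ℝ) • (((1:ℝ), (11/20:ℝ)) + ((-1:ℝ), (11/20:ℝ)))
        = (1/2:ℝ) • ((1:ℝ), (11/20:ℝ)) + (1/2:ℝ) • ((-1:ℝ), (11/20:ℝ)) := by
      rw [smul_add]
    rw [heq]; exact this
end
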